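/- arXiv:2406.14702 — 5 statements merged into one kernel-verified Lean document; each statement's English description precedes it below -/
import Mathlib

section
/- In the Lie algebra of derivations on the Danielewski surface, [xⁿW, zW] = x^{n+1}W and [yⁿV, zV] = y^{n+1}V for all n ≥ 0. Consequently the Lie algebra generated by V, W, zV, zW contains yⁿV and xⁿW for all n ≥ 0. -/
open Polynomial

set_option synthInstance.maxHeartbeats 1000000
set_option maxHeartbeats 1000000

noncomputable section

/-- Coordinate ring of the Danielewski surface `x y = p(z)`. -/
abbrev DS (p : Polynomial ℂ) : Type :=
  MvPolynomial (Fin 3) ℂ ⧸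
    Ideal.span ({MvPolynomial.X 0 * MvPolynomial.X 1 -
      Polynomial.aeval (MvPolynomial.X 2) p} : Set (MvPolynomial (Fin 3) ℂ))

def dsX (p : Polynomial ℂ) : DS p := Ideal.Quotient.mk _ (MvPolynomial.X 0)
def dsY (p : Polynomial ℂ) : DS p := Ideal.Quotient.mk _ (MvPolynomial.X 1)
def dsZ (p : Polynomial ℂ) : DS p := Ideal.Quotient.mk _ (MvPolynomial.X 2)

namespace Derivation

variable {R A : Type*} [CommRing R] [CommRing A] [Algebra R A]

theorem lie_smul_smul (D : Derivation R A A) (f g : A) :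
    ⁅f • D, g • D⁆ = (f * D g - g * D f) • D := by
  ext a
  simp only [commutator_apply, smul_apply, leibniz, smul_eq_mul]
  ring

theorem lie_pow_smul_smul_eq_pow_succ_smul {D : Derivation R A A} {f g : A}
    (hf : D f = 0) (hg : D g = f) (n : ℕ) :
    ⁅f ^ n • D, g • D⁆ = f ^ (n + 1) • D := by
  rw [lie_smul_smul, hg, leibniz_pow, hf, smul_zero, smul_zero, mul_zero, sub_zero, ← pow_succ]

theorem pow_smul_mem_of_smul_mem {D : Derivation R A A} {f g : A}
    (hf : D f = 0) (hg : D g = f) {L : LieSubalgebra R (Derivation R A A)}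
    (hD : D ∈ L) (hgD : g • D ∈ L) (n : ℕ) :
    f ^ n • D ∈ L := by
  induction n with
  | zero => rwa [pow_zero, one_smul]
  | succ n ih =>
    rw [← lie_pow_smul_smul_eq_pow_succ_smul hf hg n]
    exact L.lie_mem ih hgD

end Derivation

open Derivation in
theorem lie_span_contains_powers_general (p : Polynomial ℂ)
    (V W : Derivation ℂ (DS p) (DS p))
    (hVy : V (dsY p) = 0) (hVz : V (dsZ p) = dsY p)
    (hWx : W (dsX p) = 0)
    (hWz : W (dsZ p) = dsX p) :
    (∀ n : ℕ, ⁅(dsX p ^ n) • W, dsZ p • W⁆ = (dsX p ^ (n+1)) • W) ∧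
    (∀ n : ℕ, ⁅(dsY p ^ n) • V, dsZ p • V⁆ = (dsY p ^ (n+1)) • V) ∧
    (∀ n : ℕ, (dsY p ^ n) • V ∈
      LieSubalgebra.lieSpan ℂ (Derivation ℂ (DS p) (DS p))
        {V, W, dsZ p • V, dsZ p • W}) ∧
    (∀ n : ℕ, (dsX p ^ n) • W ∈
      LieSubalgebra.lieSpan ℂ (Derivation ℂ (DS p) (DS p))
        {V, W, dsZ p • V, dsZ p • W}) := by
  have mem {D} (hD : D ∈ ({V, W, dsZ p • V, dsZ p • W} : Set _)) :=
    LieSubalgebra.subset_lieSpan (R := ℂ) hD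
  exact ⟨lie_pow_smul_smul_eq_pow_succ_smul hWx hWz,
    lie_pow_smul_smul_eq_pow_succ_smul hVy hVz,
    pow_smul_mem_of_smul_mem hVy hVz (mem (.inl rfl)) (mem (.inr (.inr (.inl rfl)))),
    pow_smul_mem_of_smul_mem hWx hWz (mem (.inr (.inl rfl))) (mem (.inr (.inr (.inr rfl))))⟩

/-- `[xⁿW, zW] = x^(n+1)W`, `[yⁿV, zV] = y^(n+1)V`, and the Lie
algebra generated by `V, W, zV, zW` contains `yⁿV` and `xⁿW` for all `n ≥ 0`. -/
theorem lie_span_contains_powers (p : Polynomial ℂ)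
    (V W : Derivation ℂ (DS p) (DS p))
    (hVx : V (dsX p) = Polynomial.aeval (dsZ p) (derivative p))
    (hVy : V (dsY p) = 0) (hVz : V (dsZ p) = dsY p)
    (hWx : W (dsX p) = 0)
    (hWy : W (dsY p) = Polynomial.aeval (dsZ p) (derivative p))
    (hWz : W (dsZ p) = dsX p) :
    (∀ n : ℕ, ⁅(dsX p ^ n) • W, dsZ p • W⁆ = (dsX p ^ (n+1)) • W) ∧
    (∀ n : ℕ, ⁅(dsY p ^ n) • V, dsZ p • V⁆ = (dsY p ^ (n+1)) • V) ∧
    (∀ n : ℕ, (dsY p ^ n) • V ∈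
      LieSubalgebra.lieSpan ℂ (Derivation ℂ (DS p) (DS p))
        {V, W, dsZ p • V, dsZ p • W}) ∧
    (∀ n : ℕ, (dsX p ^ n) • W ∈
      LieSubalgebra.lieSpan ℂ (Derivation ℂ (DS p) (DS p))
        {V, W, dsZ p • V, dsZ p • W}) :=
  lie_span_contains_powers_general p V W hVy hVz hWx hWz
end
end

section
/- The Lie algebra generated by the six derivations V, W, H, zV, zW, zH on the Danielewski surface contains -yH, namely -yH = [zH, V] - [H, zV], and by induction contains (n+1)·z·y^{n+1}·V = [yH, z yⁿ V] for all n ≥ 0. -/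
/-!
Multiplying derivations by functions, `⁅a • D, E⁆ = a • ⁅D, E⁆ - E a • D`, and `H z = 0` gives the
first identity. The vector field `H` is the Euler field of the grading `deg x = -1`, `deg y = 1`,
`deg z = 0`, for which `V` is homogeneous of degree `1`: `⁅H, V⁆ = V`, checked on `x, y, z`. Hence
`ad (y • H)` sends `(z * yⁿ) • V` to `(n + 1) • (z * yⁿ⁺¹) • V`; starting from `z • V` and dividing
by `n + 1` keeps all `(z * yⁿ) • V` in the Lie algebra generated by the six fields.
-/

open Polynomial

set_option synthInstance.maxHeartbeats 1000000
set_option maxHeartbeats 1000000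

noncomputable section

namespace Derivation

variable {R A : Type*} [CommRing R] [CommRing A] [Algebra R A]

theorem commutator_smul_left (a : A) (D E : Derivation R A A) :
    ⁅a • D, E⁆ = a • ⁅D, E⁆ - E a • D := by
  ext b
  simp only [commutator_apply, smul_apply, sub_apply, leibniz, smul_eq_mul]
  ring

theorem commutator_smul_right (a : A) (D E : Derivation R A A) :
    ⁅D, a • E⁆ = a • ⁅D, E⁆ + D a • E := by
  ext b
  simp only [commutator_apply, smul_apply, add_apply, leibniz, smul_eq_mul]
  ring

theorem smul_commutator_sub_commutator_smul {a : A} {D : Derivation R A A} (hDa : D a = 0)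
    (E : Derivation R A A) : ⁅a • D, E⁆ - ⁅D, a • E⁆ = -(E a • D) := by
  rw [commutator_smul_left, commutator_smul_right, hDa, zero_smul, add_zero]
  abel

theorem map_pow_of_map_eq_self (D : Derivation R A A) {b : A} (hb : D b = b) (n : ℕ) :
    D (b ^ n) = n • b ^ n := by
  rcases n with _ | n
  · simp
  · rw [leibniz_pow, hb, smul_eq_mul, ← pow_succ, Nat.add_sub_cancel]

theorem commutator_smul_mul_pow_smul {H V : Derivation R A A} (hHV : ⁅H, V⁆ = V) {y z : A}
    (hVy : V y = 0) (hHy : H y = y) (hHz : H z = 0) (n : ℕ) :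
    ⁅y • H, (z * y ^ n) • V⁆ = (((n : R) + 1) • (z * y ^ (n + 1))) • V := by
  have hH : H (z * y ^ n) = n • (z * y ^ n) := by
    rw [leibniz, map_pow_of_map_eq_self H hHy, hHz, smul_zero, add_zero, smul_eq_mul, mul_smul_comm]
  rw [commutator_smul_left, commutator_smul_right, hHV, hH, smul_apply, hVy]
  simp only [smul_eq_mul, mul_zero, zero_smul, sub_zero, smul_smul, ← add_smul]
  congr 1
  rw [← Nat.cast_smul_eq_nsmul R, add_smul, one_smul, pow_succ]
  simp only [Algebra.smul_def]
  ring

theorem mul_pow_smul_mem_of_commutator {K : Type*} [Field K] [CharZero K] [Algebra K A]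
    {S : LieSubalgebra K (Derivation K A A)} {H V : Derivation K A A} (hHV : ⁅H, V⁆ = V)
    {y z : A} (hVy : V y = 0) (hHy : H y = y) (hHz : H z = 0)
    (hyH : y • H ∈ S) (hzV : z • V ∈ S) (n : ℕ) : (z * y ^ n) • V ∈ S := by
  induction n with
  | zero => simpa using hzV
  | succ n ih =>
    have hmem := S.lie_mem hyH ih
    rw [commutator_smul_mul_pow_smul hHV hVy hHy hHz, smul_assoc] at hmem
    exact (S.toSubmodule.smul_mem_iff (Nat.cast_add_one_ne_zero n)).mp hmem

end Derivation

theorem Ideal.Quotient.adjoin_range_mk_X {σ R : Type*} [CommRing R]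
    (I : Ideal (MvPolynomial σ R)) :
    Algebra.adjoin R (Set.range fun i => Ideal.Quotient.mkₐ R I (MvPolynomial.X i)) = ⊤ := by
  change Algebra.adjoin R (Set.range (Ideal.Quotient.mkₐ R I ∘ MvPolynomial.X)) = ⊤
  rw [Set.range_comp, Algebra.adjoin_image,
    MvPolynomial.adjoin_range_X, Algebra.map_top, AlgHom.range_eq_top]
  exact Ideal.Quotient.mkₐ_surjective R I

theorem DS.commutator_eq_self (p : Polynomial ℂ) {V H : Derivation ℂ (DS p) (DS p)}
    (hVx : V (dsX p) = Polynomial.aeval (dsZ p) (derivative p))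
    (hVy : V (dsY p) = 0) (hVz : V (dsZ p) = dsY p)
    (hHx : H (dsX p) = -dsX p) (hHy : H (dsY p) = dsY p) (hHz : H (dsZ p) = 0) :
    ⁅H, V⁆ = V := by
  refine Derivation.ext_of_adjoin_eq_top _ (Ideal.Quotient.adjoin_range_mk_X _) ?_
  rintro _ ⟨i, rfl⟩
  fin_cases i
  · change H (V (dsX p)) - V (H (dsX p)) = V (dsX p)
    rw [hVx, hHx, Derivation.map_aeval, hHz, smul_zero, map_neg, hVx, zero_sub, neg_neg]
  · change H (V (dsY p)) - V (H (dsY p)) = V (dsY p)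
    rw [hVy, hHy, hVy, map_zero, sub_zero]
  · change H (V (dsZ p)) - V (H (dsZ p)) = V (dsZ p)
    rw [hVz, hHy, hHz, map_zero, sub_zero]

theorem lie_span_six_generators_general (p : Polynomial ℂ)
    (V W H : Derivation ℂ (DS p) (DS p))
    (hVx : V (dsX p) = Polynomial.aeval (dsZ p) (derivative p))
    (hVy : V (dsY p) = 0) (hVz : V (dsZ p) = dsY p)
    (hHx : H (dsX p) = -dsX p) (hHy : H (dsY p) = dsY p)
    (hHz : H (dsZ p) = 0) :
    (⁅dsZ p • H, V⁆ - ⁅H, dsZ p • V⁆ = -(dsY p • H)) ∧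
    (∀ n : ℕ, ⁅dsY p • H, (dsZ p * dsY p ^ n) • V⁆ =
      (((n : ℂ) + 1) • (dsZ p * dsY p ^ (n+1))) • V) ∧
    (-(dsY p • H) ∈
      LieSubalgebra.lieSpan ℂ (Derivation ℂ (DS p) (DS p))
        {V, W, H, dsZ p • V, dsZ p • W, dsZ p • H}) ∧
    (∀ n : ℕ, (((n : ℂ) + 1) • (dsZ p * dsY p ^ (n+1))) • V ∈
      LieSubalgebra.lieSpan ℂ (Derivation ℂ (DS p) (DS p))
        {V, W, H, dsZ p • V, dsZ p • W, dsZ p • H}) := by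
  set S := LieSubalgebra.lieSpan ℂ (Derivation ℂ (DS p) (DS p))
    {V, W, H, dsZ p • V, dsZ p • W, dsZ p • H}
  have hgen : ∀ D ∈ ({V, W, H, dsZ p • V, dsZ p • W, dsZ p • H} : Set _), D ∈ S :=
    fun _ hD => LieSubalgebra.subset_lieSpan hD
  have hV : V ∈ S := hgen _ (by simp only [Set.mem_insert_iff, true_or])
  have hH : H ∈ S := hgen _ (by simp only [Set.mem_insert_iff, true_or, or_true])
  have hzV : dsZ p • V ∈ S := hgen _ (by simp only [Set.mem_insert_iff, true_or, or_true])
  have hzH : dsZ p • H ∈ S :=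
    hgen _ (by simp only [Set.mem_insert_iff, Set.mem_singleton_iff, or_true])
  have hHV : ⁅H, V⁆ = V := DS.commutator_eq_self p hVx hVy hVz hHx hHy hHz
  have hyH_eq : ⁅dsZ p • H, V⁆ - ⁅H, dsZ p • V⁆ = -(dsY p • H) := by
    rw [Derivation.smul_commutator_sub_commutator_smul hHz, hVz]
  have hbracket := Derivation.commutator_smul_mul_pow_smul hHV hVy hHy hHz
  have hyH_mem : dsY p • H ∈ S := by
    rw [← neg_mem_iff, ← hyH_eq]
    exact sub_mem (S.lie_mem hzH hV) (S.lie_mem hH hzV)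
  refine ⟨hyH_eq, hbracket, neg_mem hyH_mem, fun n => ?_⟩
  rw [← hbracket]
  exact S.lie_mem hyH_mem
    (Derivation.mul_pow_smul_mem_of_commutator hHV hVy hHy hHz hyH_mem hzV n)

/-- the Lie algebra generated by `V, W, H, zV, zW, zH` contains
`-yH = [zH,V] - [H,zV]` and `(n+1)·z·y^(n+1)·V = [yH, z yⁿ V]` for all `n ≥ 0`. -/
theorem lie_span_six_generators (p : Polynomial ℂ)
    (V W H : Derivation ℂ (DS p) (DS p))
    (hVx : V (dsX p) = Polynomial.aeval (dsZ p) (derivative p))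
    (hVy : V (dsY p) = 0) (hVz : V (dsZ p) = dsY p)
    (hWx : W (dsX p) = 0)
    (hWy : W (dsY p) = Polynomial.aeval (dsZ p) (derivative p))
    (hWz : W (dsZ p) = dsX p)
    (hHx : H (dsX p) = -dsX p) (hHy : H (dsY p) = dsY p)
    (hHz : H (dsZ p) = 0) :
    (⁅dsZ p • H, V⁆ - ⁅H, dsZ p • V⁆ = -(dsY p • H)) ∧
    (∀ n : ℕ, ⁅dsY p • H, (dsZ p * dsY p ^ n) • V⁆ =
      (((n : ℂ) + 1) • (dsZ p * dsY p ^ (n+1))) • V) ∧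
    (-(dsY p • H) ∈
      LieSubalgebra.lieSpan ℂ (Derivation ℂ (DS p) (DS p))
        {V, W, H, dsZ p • V, dsZ p • W, dsZ p • H}) ∧
    (∀ n : ℕ, (((n : ℂ) + 1) • (dsZ p * dsY p ^ (n+1))) • V ∈
      LieSubalgebra.lieSpan ℂ (Derivation ℂ (DS p) (DS p))
        {V, W, H, dsZ p • V, dsZ p • W, dsZ p • H}) :=
  lie_span_six_generators_general p V W H hVx hVy hVz hHx hHy hHz
end
end

section
/- For all n ≥ 1, the iterated adjoint action satisfies ad_V^n(W) = -(n-1)·y^{n-2}·p^{(n)}(z)·V + y^{n-1}·p^{(n+1)}(z)·H, where ad_V(X) = [V,X]. -/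
open Polynomial

set_option synthInstance.maxHeartbeats 1000000
set_option maxHeartbeats 1000000

noncomputable section

/-!
Since `V y = 0`, `V (f z) = f' z * y` and `⁅V, H⁆ = -V`, the bracket with `V` preserves the
module spanned by `V` and `H` over the coordinate ring, acting on coefficients by
`⁅V, c • V + g • H⁆ = (V c - g) • V + V g • H`. Starting from `⁅V, W⁆ = p''(z) • H`, an induction
on `n` along this rule produces the stated coefficients.
-/

namespace Derivation

variable {R A : Type*} [CommRing R] [CommRing A] [Algebra R A]

theorem lie_smul_right (D E : Derivation R A A) (a : A) :
    ⁅D, a • E⁆ = D a • E + a • ⁅D, E⁆ := by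
  ext b
  simp only [commutator_apply, smul_apply, add_apply, smul_eq_mul, leibniz]
  ring

theorem lie_smul_add_smul_of_lie_eq_neg {V H : Derivation R A A} (hVH : ⁅V, H⁆ = -V)
    (c g : A) : ⁅V, c • V + g • H⁆ = (V c - g) • V + V g • H := by
  rw [lie_add, lie_smul_right, lie_smul_right, lie_self, hVH, smul_zero,
    add_zero, smul_neg, sub_smul]
  abel

theorem iterate_lie_eq {V W H : Derivation R A A} {y z : A} {p : R[X]} (hVy : V y = 0)
    (hVz : V z = y) (hVH : ⁅V, H⁆ = -V)
    (hVW : ⁅V, W⁆ = aeval z ((fun q => derivative q)^[2] p) • H) (m : ℕ) :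
    (fun X => ⁅V, X⁆)^[m + 1] W =
      ((-(m : R)) • (y ^ (m - 1) * aeval z ((fun q => derivative q)^[m + 1] p))) • V +
        (y ^ m * aeval z ((fun q => derivative q)^[m + 2] p)) • H := by
  have hVaeval (k : ℕ) : V (aeval z ((fun q => derivative q)^[k] p)) =
      aeval z ((fun q => derivative q)^[k + 1] p) * y := by
    rw [map_aeval, hVz, smul_eq_mul, Function.iterate_succ_apply']
  have hVpow (k : ℕ) : V (y ^ k) = 0 := by simp [leibniz_pow, hVy]
  induction m with
  | zero => simpa using hVW
  | succ m ih =>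
    have hH : V (y ^ m * aeval z ((fun q => derivative q)^[m + 2] p)) =
        y ^ (m + 1) * aeval z ((fun q => derivative q)^[m + 1 + 2] p) := by
      rw [leibniz, hVpow, hVaeval, smul_zero, add_zero, smul_eq_mul, pow_succ]
      ring
    have hV : V ((-(m : R)) • (y ^ (m - 1) * aeval z ((fun q => derivative q)^[m + 1] p))) -
        y ^ m * aeval z ((fun q => derivative q)^[m + 2] p) =
        (-((m + 1 : ℕ) : R)) •
          (y ^ (m + 1 - 1) * aeval z ((fun q => derivative q)^[m + 1 + 1] p)) := by
      rw [map_smul, leibniz, hVpow, hVaeval, smul_zero, add_zero, smul_eq_mul]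
      -- at `m = 0` the truncated exponent `m - 1` is harmless, its coefficient being `0`
      rcases m with _ | m
      · simp
      · simp only [Nat.add_sub_cancel, Nat.cast_add, Nat.cast_one, pow_succ]
        set P := aeval z ((fun q => derivative q)^[m + 1 + 2] p)
        rw [show y ^ m * (P * y) = y ^ m * y * P by ring]
        module
    rw [Function.iterate_succ_apply', ih, lie_smul_add_smul_of_lie_eq_neg hVH, hV, hH]

end Derivation

theorem DS.adjoin_eq_top (p : Polynomial ℂ) :
    Algebra.adjoin ℂ ({dsX p, dsY p, dsZ p} : Set (DS p)) = ⊤ := by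
  have h1 : ({dsX p, dsY p, dsZ p} : Set (DS p)) =
      (Ideal.Quotient.mkₐ ℂ _) '' Set.range (MvPolynomial.X (R := ℂ) (σ := Fin 3)) := by
    ext a
    constructor
    · rintro (rfl | rfl | rfl)
      exacts [⟨_, ⟨0, rfl⟩, rfl⟩, ⟨_, ⟨1, rfl⟩, rfl⟩, ⟨_, ⟨2, rfl⟩, rfl⟩]
    · rintro ⟨_, ⟨i, rfl⟩, rfl⟩
      fin_cases i
      · exact Or.inl rfl
      · exact Or.inr (Or.inl rfl)
      · exact Or.inr (Or.inr rfl)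
  rw [h1, ← AlgHom.map_adjoin, MvPolynomial.adjoin_range_X, Algebra.map_top]
  exact (AlgHom.range_eq_top _).2 (Ideal.Quotient.mkₐ_surjective ℂ _)

theorem DS.derivation_ext {p : Polynomial ℂ} {D₁ D₂ : Derivation ℂ (DS p) (DS p)}
    (hx : D₁ (dsX p) = D₂ (dsX p)) (hy : D₁ (dsY p) = D₂ (dsY p))
    (hz : D₁ (dsZ p) = D₂ (dsZ p)) : D₁ = D₂ := by
  refine Derivation.ext_of_adjoin_eq_top _ (DS.adjoin_eq_top p) ?_
  rintro a (rfl | rfl | rfl) <;> assumption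

/-- for `n ≥ 1`,
`ad_V^n(W) = -(n-1)·y^(n-2)·p^(n)(z)·V + y^(n-1)·p^(n+1)(z)·H`. -/
theorem adV_iter_W (p : Polynomial ℂ)
    (V W H : Derivation ℂ (DS p) (DS p))
    (hVx : V (dsX p) = Polynomial.aeval (dsZ p) (derivative p))
    (hVy : V (dsY p) = 0) (hVz : V (dsZ p) = dsY p)
    (hWx : W (dsX p) = 0)
    (hWy : W (dsY p) = Polynomial.aeval (dsZ p) (derivative p))
    (hWz : W (dsZ p) = dsX p)
    (hHx : H (dsX p) = -dsX p) (hHy : H (dsY p) = dsY p)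
    (hHz : H (dsZ p) = 0) :
    ∀ n : ℕ, 1 ≤ n →
      (fun X => ⁅V, X⁆)^[n] W =
        ((-((n : ℂ) - 1)) • (dsY p ^ (n - 2) *
            Polynomial.aeval (dsZ p) ((fun q => derivative q)^[n] p))) • V +
        (dsY p ^ (n - 1) *
            Polynomial.aeval (dsZ p) ((fun q => derivative q)^[n+1] p)) • H := by
  have hVH : ⁅V, H⁆ = -V := by
    apply DS.derivation_ext <;>
      simp [Derivation.commutator_apply, Derivation.map_aeval, hVx, hVy, hVz, hHx, hHy, hHz]
  have hVW : ⁅V, W⁆ = aeval (dsZ p) ((fun q => derivative q)^[2] p) • H := by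
    apply DS.derivation_ext <;>
      simp [Derivation.commutator_apply, Derivation.map_aeval, hVx, hVy, hVz, hWx, hWy, hWz,
        hHx, hHy, hHz]
    ring
  intro n hn
  obtain ⟨m, rfl⟩ := Nat.exists_eq_add_of_le' hn
  simpa using Derivation.iterate_lie_eq hVy hVz hVH hVW m
end
end

section
/- The Lie algebra of derivations generated by V, W, and yV contains y^n·V for every n ≥ d-2, where d = deg p ≥ 2. -/
open Polynomial

set_option synthInstance.maxHeartbeats 1000000
set_option maxHeartbeats 1000000

noncomputable section

/-- The shape of the derivations occurring in the iterated-bracket chain. -/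
def IsP (p : Polynomial ℂ) (k n : ℕ) (D : Derivation ℂ (DS p) (DS p)) : Prop :=
  (D (dsX p) = -((n : DS p) * (Polynomial.aeval (dsZ p) (derivative p) *
        Polynomial.aeval (dsZ p) (derivative^[k] p)) * dsY p ^ (n - 1))
      - Polynomial.aeval (dsZ p) (derivative^[k + 1] p) * dsX p * dsY p ^ n)
  ∧ (D (dsY p) = Polynomial.aeval (dsZ p) (derivative^[k + 1] p) * dsY p ^ (n + 1))
  ∧ (D (dsZ p) = -((n : DS p) * Polynomial.aeval (dsZ p) (derivative^[k] p) * dsY p ^ n))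

/-- the Lie algebra generated by `V, W, yV` contains `yⁿV`
for every `n ≥ d - 2`, where `d = deg p ≥ 2`. -/
theorem lie_span_V_W_yV (p : Polynomial ℂ) (hd : 2 ≤ p.natDegree)
    (V W : Derivation ℂ (DS p) (DS p))
    (hVx : V (dsX p) = Polynomial.aeval (dsZ p) (derivative p))
    (hVy : V (dsY p) = 0) (hVz : V (dsZ p) = dsY p)
    (hWx : W (dsX p) = 0)
    (hWy : W (dsY p) = Polynomial.aeval (dsZ p) (derivative p))
    (hWz : W (dsZ p) = dsX p) :
    ∀ n : ℕ, p.natDegree - 2 ≤ n →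
      (dsY p ^ n) • V ∈
        LieSubalgebra.lieSpan ℂ (Derivation ℂ (DS p) (DS p))
          {V, W, dsY p • V} := by
  set L := LieSubalgebra.lieSpan ℂ (Derivation ℂ (DS p) (DS p)) {V, W, dsY p • V} with hL
  -- basic membership facts
  have hVL : V ∈ L := LieSubalgebra.subset_lieSpan (by simp)
  have hWL : W ∈ L := LieSubalgebra.subset_lieSpan (by simp)
  have hyVL : dsY p • V ∈ L := LieSubalgebra.subset_lieSpan (by simp)
  -- iterated derivative facts
  have hit : ∀ j : ℕ, derivative (derivative^[j] p) = derivative^[j + 1] p := fun j =>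
    (Function.iterate_succ_apply' _ j p).symm
  have hit2 : (derivative^[1 + 1] p : ℂ[X]) = derivative (derivative p) := by
    rw [← hit 1, Function.iterate_one]
  -- helper : applying a smul derivation
  have hsm : ∀ (a b : DS p) (D : Derivation ℂ (DS p) (DS p)), (a • D) b = a * D b :=
    fun a b D => by rw [Derivation.smul_apply, smul_eq_mul]
  have hVyp : ∀ j : ℕ, V (dsY p ^ j) = 0 := fun j => by
    rw [Derivation.leibniz_pow, hVy]; simp
  -- THE KEY BRACKET LEMMA
  have key : ∀ (k n s : ℕ) (D : Derivation ℂ (DS p) (DS p)), IsP p k n D →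
      IsP p (k + 1) (n + s + 1) (-⁅D, (dsY p ^ s) • V⁆) := by
    intro k n s D hD
    obtain ⟨h1, h2, h3⟩ := hD
    have hDy : D (dsY p ^ s) = (s : DS p) * dsY p ^ (s - 1) *
        (Polynomial.aeval (dsZ p) (derivative^[k + 1] p) * dsY p ^ (n + 1)) := by
      rw [Derivation.leibniz_pow, h2, smul_eq_mul, nsmul_eq_mul]; ring
    refine ⟨?_, ?_, ?_⟩
    · -- value at x
      rw [Derivation.neg_apply, Derivation.commutator_apply, hsm, hsm, hVx, h1]
      rw [Derivation.leibniz, hDy]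
      simp only [map_sub, map_neg, Derivation.leibniz, Derivation.map_aeval, hVx, hVy, hVz,
        Derivation.map_natCast, hVyp, h3, hit, smul_eq_mul, mul_zero, zero_mul]
      rcases n with _ | n <;> rcases s with _ | s <;>
        simp only [Nat.cast_zero, Nat.zero_sub, Nat.sub_zero, Nat.succ_sub_one, pow_zero,
          Nat.cast_succ, zero_mul, mul_zero, zero_add, add_zero, neg_zero, sub_zero] <;>
        push_cast <;> ring
    · -- value at y
      rw [Derivation.neg_apply, Derivation.commutator_apply, hsm, hsm, hVy, h2]
      simp only [map_sub, map_neg, Derivation.leibniz, Derivation.map_aeval, hVx, hVy, hVz,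
        Derivation.map_natCast, hVyp, h3, hit, smul_eq_mul, mul_zero, zero_mul, map_zero]
      push_cast
      ring
    · -- value at z
      rw [Derivation.neg_apply, Derivation.commutator_apply, hsm, hsm, hVz, h3]
      have hyy : D (dsY p ^ s * dsY p) = D (dsY p ^ s) * dsY p + dsY p ^ s * D (dsY p) := by
        rw [Derivation.leibniz, smul_eq_mul, smul_eq_mul]; ring
      rw [hyy, hDy, h2]
      simp only [map_neg, Derivation.leibniz, Derivation.map_aeval, hVx, hVy, hVz,
        Derivation.map_natCast, hVyp, h3, hit, smul_eq_mul, mul_zero, zero_mul]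
      rcases n with _ | n <;> rcases s with _ | s <;>
        simp only [Nat.cast_zero, Nat.zero_sub, Nat.sub_zero, Nat.succ_sub_one, pow_zero,
          Nat.cast_succ, zero_mul, mul_zero, zero_add, add_zero, neg_zero, sub_zero] <;>
        push_cast <;> ring
  -- START OF THE CHAIN
  have start : ∀ s : ℕ, IsP p 1 s (-⁅W, (dsY p ^ s) • V⁆) := by
    intro s
    have hWy' : W (dsY p ^ s) = (s : DS p) * dsY p ^ (s - 1) *
        Polynomial.aeval (dsZ p) (derivative p) := by
      rw [Derivation.leibniz_pow, hWy, smul_eq_mul, nsmul_eq_mul]; ring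
    refine ⟨?_, ?_, ?_⟩
    · rw [Derivation.neg_apply, Derivation.commutator_apply, hsm, hsm, hVx, hWx, map_zero]
      rw [Derivation.leibniz, hWy']
      simp only [Derivation.map_aeval, hWz, smul_eq_mul, mul_zero,
        Function.iterate_one, hit2]
      rcases s with _ | s <;>
        simp only [Nat.cast_zero, Nat.zero_sub, Nat.sub_zero, Nat.succ_sub_one, pow_zero,
          Nat.cast_succ, zero_mul, mul_zero, zero_add, add_zero, neg_zero, sub_zero] <;>
        push_cast <;> ring
    · rw [Derivation.neg_apply, Derivation.commutator_apply, hsm, hsm, hVy, hWy]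
      simp only [Derivation.map_aeval, hVz, smul_eq_mul, mul_zero, map_zero,
        Function.iterate_one, hit2]
      push_cast
      ring
    · rw [Derivation.neg_apply, Derivation.commutator_apply, hsm, hsm, hVz, hWz, hVx]
      have hyy : W (dsY p ^ s * dsY p) = W (dsY p ^ s) * dsY p + dsY p ^ s * W (dsY p) := by
        rw [Derivation.leibniz, smul_eq_mul, smul_eq_mul]; ring
      rw [hyy, hWy', hWy, Function.iterate_one]
      rcases s with _ | s <;>
        simp only [Nat.cast_zero, Nat.zero_sub, Nat.sub_zero, Nat.succ_sub_one, pow_zero,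
          Nat.cast_succ, zero_mul, mul_zero, zero_add, add_zero, neg_zero, sub_zero] <;>
        push_cast <;> ring
  -- membership of the chain elements
  have memstep : ∀ (s : ℕ) (D : Derivation ℂ (DS p) (DS p)), D ∈ L → (dsY p ^ s) • V ∈ L →
      -⁅D, (dsY p ^ s) • V⁆ ∈ L := fun s D hD hYs => neg_mem (L.lie_mem hD hYs)
  have hY0 : (dsY p ^ 0) • V ∈ L := by rw [pow_zero, one_smul]; exact hVL
  have hY1 : (dsY p ^ 1) • V ∈ L := by rw [pow_one]; exact hyVL
  -- GROWING THE CHAIN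
  have grow : ∀ (a b k n : ℕ) (D : Derivation ℂ (DS p) (DS p)), D ∈ L → IsP p k n D →
      ∃ D' : Derivation ℂ (DS p) (DS p), D' ∈ L ∧ IsP p (k + a + b) (n + a + 2 * b) D' := by
    intro a
    induction a with
    | zero =>
      intro b
      induction b with
      | zero => intro k n D hDL hD; exact ⟨D, hDL, by simpa using hD⟩
      | succ b ih =>
        intro k n D hDL hD
        obtain ⟨D', hD'L, hD'⟩ := ih k n D hDL hD
        refine ⟨-⁅D', (dsY p ^ 1) • V⁆, memstep 1 D' hD'L hY1, ?_⟩
        have hstep := key (k + 0 + b) (n + 0 + 2 * b) 1 D' hD'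
        have e1 : k + 0 + (b + 1) = k + 0 + b + 1 := by omega
        have e2 : n + 0 + 2 * (b + 1) = n + 0 + 2 * b + 1 + 1 := by omega
        simp only [e1, e2]
        exact hstep
    | succ a ih =>
      intro b k n D hDL hD
      obtain ⟨D', hD'L, hD'⟩ := ih b k n D hDL hD
      refine ⟨-⁅D', (dsY p ^ 0) • V⁆, memstep 0 D' hD'L hY0, ?_⟩
      have hstep := key (k + a + b) (n + a + 2 * b) 0 D' hD'
      have e1 : k + (a + 1) + b = k + a + b + 1 := by omega
      have e2 : n + (a + 1) + 2 * b = n + a + 2 * b + 0 + 1 := by omega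
      simp only [e1, e2]
      exact hstep
  -- THE CONSTANT: d-th derivative of p
  set d := p.natDegree with hdd
  set c : ℂ := (derivative^[d] p).coeff 0 with hc
  have hpd : derivative^[d] p = Polynomial.C c := by
    apply Polynomial.eq_C_of_natDegree_le_zero
    have := Polynomial.natDegree_iterate_derivative p d
    omega
  have hpd1 : derivative^[d + 1] p = 0 :=
    Polynomial.iterate_derivative_eq_zero (by omega)
  have hc0 : c ≠ 0 := by
    rw [hc, Polynomial.coeff_iterate_derivative]
    simp only [zero_add]
    have hp0 : p ≠ 0 := fun h => by simp [h, hdd] at hd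
    have h1 : p.coeff d = p.leadingCoeff := rfl
    have h2 : p.leadingCoeff ≠ 0 := Polynomial.leadingCoeff_ne_zero.mpr hp0
    have h3 : d.descFactorial d ≠ 0 := by
      have := Nat.factorial_pos d
      rw [Nat.descFactorial_self]
      omega
    simp only [smul_ne_zero_iff, h1]
    exact ⟨h3, h2⟩
  -- generators generate
  have hgen : Algebra.adjoin ℂ ({dsX p, dsY p, dsZ p} : Set (DS p)) = ⊤ := by
    rw [eq_top_iff]
    rintro a -
    obtain ⟨q, rfl⟩ := Ideal.Quotient.mk_surjective a
    induction q using MvPolynomial.induction_on with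
    | C r =>
      have : (Ideal.Quotient.mk _ (MvPolynomial.C r : MvPolynomial (Fin 3) ℂ) : DS p)
          = algebraMap ℂ (DS p) r := rfl
      rw [this]
      exact Subalgebra.algebraMap_mem _ r
    | add q r hq hr =>
      rw [map_add]; exact add_mem hq hr
    | mul_X q i hq =>
      rw [map_mul]
      refine mul_mem hq (Algebra.subset_adjoin ?_)
      fin_cases i
      · left; rfl
      · right; left; rfl
      · right; right; rfl
  -- EXTRACTION
  have extract : ∀ (M : ℕ) (D : Derivation ℂ (DS p) (DS p)), IsP p d (M + 1) D →
      D = (-((M : ℂ) + 1) * c) • ((dsY p ^ M) • V) := by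
    intro M D hD
    obtain ⟨h1, h2, h3⟩ := hD
    rw [hpd, hpd1] at h1
    rw [hpd1] at h2
    rw [hpd] at h3
    apply Derivation.ext_of_adjoin_eq_top _ hgen
    rintro a ha
    simp only [Set.mem_insert_iff, Set.mem_singleton_iff] at ha
    have hCc : (Polynomial.aeval (dsZ p) (Polynomial.C c) : DS p)
        = algebraMap ℂ (DS p) c := by simp
    have hmu : ∀ b : DS p, ((-((M : ℂ) + 1) * c) • ((dsY p ^ M) • V)) b
        = algebraMap ℂ (DS p) (-((M : ℂ) + 1) * c) * (dsY p ^ M * V b) := by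
      intro b
      rw [Derivation.smul_apply, hsm]
      exact Algebra.smul_def (-((M : ℂ) + 1) * c) (dsY p ^ M * V b)
    rcases ha with rfl | rfl | rfl
    · rw [h1, hmu, hVx]
      simp only [map_zero, zero_mul, sub_zero, hCc, Nat.add_sub_cancel, map_mul, map_neg,
        map_add, map_one, map_natCast]
      push_cast
      ring
    · rw [h2, hmu, hVy]
      simp only [map_zero, zero_mul, mul_zero]
    · rw [h3, hmu, hVz]
      simp only [hCc, map_mul, map_neg, map_add, map_one, map_natCast]
      rw [show dsY p ^ M * dsY p = dsY p ^ (M + 1) from (pow_succ (dsY p) M).symm]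
      push_cast
      ring
  have extract_mem : ∀ (M : ℕ) (D : Derivation ℂ (DS p) (DS p)), D ∈ L →
      IsP p d (M + 1) D → (dsY p ^ M) • V ∈ L := by
    intro M D hDL hD
    have hE := extract M D hD
    have hmu : (-((M : ℂ) + 1) * c) ≠ 0 :=
      mul_ne_zero (neg_ne_zero.mpr (Nat.cast_add_one_ne_zero M)) hc0
    have heq : (dsY p ^ M) • V = (-((M : ℂ) + 1) * c)⁻¹ • D := by
      rw [hE, smul_smul, inv_mul_cancel₀ hmu, one_smul]
    rw [heq]
    exact L.smul_mem _ hDL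
  -- MAIN INDUCTION
  have main : ∀ b : ℕ, (dsY p ^ (d - 2 + b)) • V ∈ L := by
    intro b
    induction b using Nat.strong_induction_on with
    | _ b IH =>
      by_cases hb : b ≤ d - 1
      · -- base case via a chain from IsP 1 0
        have hstart := start 0
        have hsmem : -⁅W, (dsY p ^ 0) • V⁆ ∈ L := memstep 0 W hWL hY0
        obtain ⟨D, hDL, hD⟩ := grow (d - 1 - b) b 1 0 _ hsmem hstart
        have e1 : 1 + (d - 1 - b) + b = d := by omega
        have e2 : 0 + (d - 1 - b) + 2 * b = (d - 2 + b) + 1 := by omega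
        simp only [e1, e2] at hD
        exact extract_mem _ D hDL hD
      · -- inductive step via G = IsP (d-1) (d-1) and the already-known yˢ•V
        push_neg at hb
        have hIH : (dsY p ^ (d - 2 + (b - (d - 1)))) • V ∈ L := IH (b - (d - 1)) (by omega)
        have hstart := start 1
        have hsmem : -⁅W, (dsY p ^ 1) • V⁆ ∈ L := memstep 1 W hWL hY1
        obtain ⟨G, hGL, hG⟩ := grow (d - 2) 0 1 1 _ hsmem hstart
        have e1 : 1 + (d - 2) + 0 = d - 1 := by omega
        have e2 : 1 + (d - 2) + 2 * 0 = d - 1 := by omega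
        simp only [e1, e2] at hG
        have hD := key (d - 1) (d - 1) (d - 2 + (b - (d - 1))) G hG
        have hDL : -⁅G, (dsY p ^ (d - 2 + (b - (d - 1)))) • V⁆ ∈ L :=
          memstep _ G hGL hIH
        have e3 : d - 1 + 1 = d := by omega
        have e4 : d - 1 + (d - 2 + (b - (d - 1))) + 1 = (d - 2 + b) + 1 := by omega
        simp only [e3, e4] at hD
        exact extract_mem _ _ hDL hD
  intro n hn
  obtain ⟨b, rfl⟩ := Nat.exists_eq_add_of_le hn
  exact main b
end
end

section
/- On the affine modification Z_p = {(x,y,z) ∈ ℂ×ℂ×ℂ^N : xy = p(z)}, the derivations V_k, W_k, H satisfy: [V_k, W_k] = (∂²p/∂z_k²)·H; [V_k, W_ℓ] = (∂²p/∂z_k∂z_ℓ)·H + (∂p/∂z_k)·∂/∂z_ℓ - (∂p/∂z_ℓ)·∂/∂z_k for ℓ ≠ k; [V_k, V_ℓ] = 0; [W_k, W_ℓ] = 0; [V_k, H] = -V_k; [W_k, H] = W_k. -/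
open MvPolynomial

set_option synthInstance.maxHeartbeats 1000000
set_option maxHeartbeats 1000000

noncomputable section

/-- Coordinate ring of the affine modification `x y = p(z₁,…,z_N)`. -/
abbrev AM (N : ℕ) (p : MvPolynomial (Fin N) ℂ) : Type :=
  MvPolynomial (Fin 2 ⊕ Fin N) ℂ ⧸
    Ideal.span ({MvPolynomial.X (Sum.inl 0) * MvPolynomial.X (Sum.inl 1) -
      MvPolynomial.rename Sum.inr p} : Set (MvPolynomial (Fin 2 ⊕ Fin N) ℂ))

def amX (N : ℕ) (p : MvPolynomial (Fin N) ℂ) : AM N p :=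
  Ideal.Quotient.mk _ (MvPolynomial.X (Sum.inl 0))
def amY (N : ℕ) (p : MvPolynomial (Fin N) ℂ) : AM N p :=
  Ideal.Quotient.mk _ (MvPolynomial.X (Sum.inl 1))
def amZ (N : ℕ) (p : MvPolynomial (Fin N) ℂ) (k : Fin N) : AM N p :=
  Ideal.Quotient.mk _ (MvPolynomial.X (Sum.inr k))
/-- `∂p/∂z_k` as an element of the coordinate ring. -/
def amD (N : ℕ) (p : MvPolynomial (Fin N) ℂ) (k : Fin N) : AM N p :=
  Ideal.Quotient.mk _ (MvPolynomial.rename Sum.inr (MvPolynomial.pderiv k p))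
/-- `∂²p/∂z_k∂z_ℓ` as an element of the coordinate ring. -/
def amD2 (N : ℕ) (p : MvPolynomial (Fin N) ℂ) (k l : Fin N) : AM N p :=
  Ideal.Quotient.mk _
    (MvPolynomial.rename Sum.inr (MvPolynomial.pderiv k (MvPolynomial.pderiv l p)))

/-- Partial derivatives commute. -/
lemma pderiv_comm' {σ R : Type*} [CommSemiring R] (i j : σ) (f : MvPolynomial σ R) :
    pderiv i (pderiv j f) = pderiv j (pderiv i f) := by
  classical
  induction f using MvPolynomial.induction_on with
  | C a => simp
  | add f g hf hg => simp [hf, hg]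
  | mul_X f k ih =>
      simp only [pderiv_mul, map_add, pderiv_mul, ih, pderiv_X, Pi.single_apply]
      split_ifs <;> simp <;> ring

/-- Derivations on the coordinate ring are determined by their values on the
generators `x`, `y`, `z_l`. -/
lemma AM.derivation_ext {N : ℕ} {p : MvPolynomial (Fin N) ℂ}
    {D1 D2 : Derivation ℂ (AM N p) (AM N p)}
    (hx : D1 (amX N p) = D2 (amX N p)) (hy : D1 (amY N p) = D2 (amY N p))
    (hz : ∀ l, D1 (amZ N p l) = D2 (amZ N p l)) : D1 = D2 := by
  set I := Ideal.span ({MvPolynomial.X (Sum.inl 0) * MvPolynomial.X (Sum.inl 1) -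
      MvPolynomial.rename Sum.inr p} : Set (MvPolynomial (Fin 2 ⊕ Fin N) ℂ))
  have htop : Algebra.adjoin ℂ
      (Set.range (fun i => Ideal.Quotient.mk I (X i))) = ⊤ := by
    have h1 : Set.range (fun i => Ideal.Quotient.mk I (X i)) =
        (Ideal.Quotient.mkₐ ℂ I) '' (Set.range (X : _ → MvPolynomial (Fin 2 ⊕ Fin N) ℂ)) := by
      rw [← Set.range_comp]; rfl
    rw [h1, ← AlgHom.map_adjoin, MvPolynomial.adjoin_range_X, Algebra.map_top,
      AlgHom.range_eq_top]
    exact Ideal.Quotient.mkₐ_surjective ℂ I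
  apply Derivation.ext_of_adjoin_eq_top _ htop
  rintro _ ⟨i, rfl⟩
  rcases i with j | l
  · fin_cases j
    · exact hx
    · exact hy
  · exact hz l

/-- Chain rule for derivations applied to polynomials in the z-variables. -/
lemma AM.deriv_rename {N : ℕ} {p : MvPolynomial (Fin N) ℂ}
    (D : Derivation ℂ (AM N p) (AM N p)) (q : MvPolynomial (Fin N) ℂ) :
    D (Ideal.Quotient.mk _ (rename Sum.inr q)) =
      ∑ j : Fin N, Ideal.Quotient.mk _ (rename Sum.inr (pderiv j q)) * D (amZ N p j) := by
  induction q using MvPolynomial.induction_on with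
  | C a =>
      rw [rename_C]
      have h0 : (Ideal.Quotient.mk _ (C a : MvPolynomial (Fin 2 ⊕ Fin N) ℂ)) =
          algebraMap ℂ (AM N p) a := rfl
      rw [h0, Derivation.map_algebraMap]
      simp [pderiv_C]
  | add f g hf hg => simp [map_add, hf, hg, Finset.sum_add_distrib, add_mul]
  | mul_X f i ih =>
      have key : (rename (Sum.inr : Fin N → Fin 2 ⊕ Fin N)) (f * X i) =
          rename Sum.inr f * X (Sum.inr i) := by simp
      rw [key, map_mul, Derivation.leibniz]
      simp only [smul_eq_mul, ih]
      rw [Finset.mul_sum]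
      have hsummand : ∀ j : Fin N, (Ideal.Quotient.mk _
          ((rename (Sum.inr : Fin N → Fin 2 ⊕ Fin N)) (pderiv j (f * X i)))) * D (amZ N p j) =
          (if i = j then Ideal.Quotient.mk _ (rename Sum.inr f) * D (amZ N p j) else 0) +
          amZ N p i * ((Ideal.Quotient.mk _ ((rename (Sum.inr : Fin N → Fin 2 ⊕ Fin N))
            (pderiv j f))) * D (amZ N p j)) := by
        intro j
        classical
        rw [pderiv_mul, pderiv_X, Pi.single_apply]
        split_ifs with h
        · simp only [mul_one, map_add, map_mul, add_mul, rename_X, amZ]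
          ring
        · simp only [mul_zero, add_zero, map_mul, rename_X, amZ, zero_add]
          ring
      rw [Finset.sum_congr rfl (fun j _ => hsummand j), Finset.sum_add_distrib,
        Finset.sum_ite_eq Finset.univ i (fun j => Ideal.Quotient.mk _ (rename Sum.inr f) * D (amZ N p j))]
      simp only [Finset.mem_univ, if_true, amZ, mul_assoc]

/-- commutator identities for `V_k, W_k, H` on the affine
modification `xy = p(z)`.  The derivation
`(∂p/∂z_k)·∂/∂z_ℓ - (∂p/∂z_ℓ)·∂/∂z_k` is characterized by its values on the
generators. -/
theorem affine_modification_brackets (N : ℕ) (p : MvPolynomial (Fin N) ℂ)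
    (V W : Fin N → Derivation ℂ (AM N p) (AM N p))
    (H : Derivation ℂ (AM N p) (AM N p))
    (hVx : ∀ k, V k (amX N p) = amD N p k)
    (hVy : ∀ k, V k (amY N p) = 0)
    (hVz : ∀ k l, V k (amZ N p l) = if l = k then amY N p else 0)
    (hWx : ∀ k, W k (amX N p) = 0)
    (hWy : ∀ k, W k (amY N p) = amD N p k)
    (hWz : ∀ k l, W k (amZ N p l) = if l = k then amX N p else 0)
    (hHx : H (amX N p) = -amX N p) (hHy : H (amY N p) = amY N p)
    (hHz : ∀ l, H (amZ N p l) = 0) :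
    (∀ k, ⁅V k, W k⁆ = amD2 N p k k • H) ∧
    (∀ k l, k ≠ l → ∀ D : Derivation ℂ (AM N p) (AM N p),
      D (amX N p) = 0 → D (amY N p) = 0 →
      (∀ j, D (amZ N p j) =
        if j = l then amD N p k else if j = k then -amD N p l else 0) →
      ⁅V k, W l⁆ = amD2 N p k l • H + D) ∧
    (∀ k l, ⁅V k, V l⁆ = 0) ∧
    (∀ k l, ⁅W k, W l⁆ = 0) ∧
    (∀ k, ⁅V k, H⁆ = -V k) ∧
    (∀ k, ⁅W k, H⁆ = W k) := by
  classical
  have hVD : ∀ k l, V k (amD N p l) = amD2 N p k l * amY N p := by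
    intro k l
    rw [amD, AM.deriv_rename]
    simp only [hVz, mul_ite, mul_zero, mul_one]
    rw [Finset.sum_ite_eq' Finset.univ k]
    simp [amD2]
  have hWD : ∀ k l, W k (amD N p l) = amD2 N p k l * amX N p := by
    intro k l
    rw [amD, AM.deriv_rename]
    simp only [hWz, mul_ite, mul_zero, mul_one]
    rw [Finset.sum_ite_eq' Finset.univ k]
    simp [amD2]
  have hHD : ∀ l, H (amD N p l) = 0 := by
    intro l
    rw [amD, AM.deriv_rename]
    simp [hHz]
  have hD2comm : ∀ k l, amD2 N p k l = amD2 N p l k := by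
    intro k l
    rw [amD2, amD2, pderiv_comm']
  refine ⟨?_, ?_, ?_, ?_, ?_, ?_⟩
  · intro k
    apply AM.derivation_ext
    · simp only [Derivation.commutator_apply, Derivation.smul_apply, hVx, hWx, hHx, hWD,
        smul_eq_mul, map_zero, zero_sub]
      ring
    · simp [Derivation.commutator_apply, Derivation.smul_apply, hVy, hWy, hHy, hVD,
        smul_eq_mul, mul_comm]
    · intro j
      simp [Derivation.commutator_apply, Derivation.smul_apply, hVz, hWz, hHz,
        apply_ite (V k), apply_ite (W k), hVx, hWy]
  · intro k l hkl D hDx hDy hDz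
    apply AM.derivation_ext
    · simp only [Derivation.commutator_apply, Derivation.add_apply, Derivation.smul_apply,
        hVx, hWx, hHx, hWD, hDx, map_zero, smul_eq_mul]
      rw [hD2comm l k]
      ring
    · simp only [Derivation.commutator_apply, Derivation.add_apply, Derivation.smul_apply,
        hVy, hWy, hHy, hVD, hDy, map_zero, smul_eq_mul]
      ring
    · intro j
      simp only [Derivation.commutator_apply, Derivation.add_apply, Derivation.smul_apply,
        hVz, hWz, hHz, hDz, apply_ite (V k), apply_ite (W l), hVx, hWy, map_zero,
        smul_zero, zero_add, smul_eq_mul]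
      rcases eq_or_ne j l with rfl | hjl
      · simp [Ne.symm hkl]
      · rcases eq_or_ne j k with rfl | hjk
        · simp [hjl, sub_eq_neg_self]
        · simp [hjl, hjk]
  · intro k l
    apply AM.derivation_ext
    · simp only [Derivation.commutator_apply, hVx, hVD, Derivation.zero_apply]
      rw [hD2comm k l]
      ring
    · simp [Derivation.commutator_apply, hVy]
    · intro j
      simp [Derivation.commutator_apply, hVz, apply_ite (V k), apply_ite (V l), hVy]
  · intro k l
    apply AM.derivation_ext
    · simp [Derivation.commutator_apply, hWx]
    · simp only [Derivation.commutator_apply, hWy, hWD, Derivation.zero_apply]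
      rw [hD2comm k l]
      ring
    · intro j
      simp [Derivation.commutator_apply, hWz, apply_ite (W k), apply_ite (W l), hWx]
  · intro k
    apply AM.derivation_ext
    · simp [Derivation.commutator_apply, hVx, hHx, hHD, hVy]
    · simp [Derivation.commutator_apply, hVy, hHy]
    · intro j
      simp [Derivation.commutator_apply, hVz, hHz, apply_ite H, hHy]
  · intro k
    apply AM.derivation_ext
    · simp [Derivation.commutator_apply, hWx, hHx, hWy]
    · simp [Derivation.commutator_apply, hWy, hHy, hHD]
    · intro j
      simp only [Derivation.commutator_apply, hWz, hHz, apply_ite H, hHx, map_zero, zero_sub]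
      split_ifs <;> simp
end
end
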